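/- For every integer i ≥ 0 one has π_i(T) ∈ T^{p^i}·(1 + T·ℤ_p[[T]]) + p·T·ℤ_p[[T]]. -/

import Mathlib

open PowerSeries

noncomputable section

open scoped Classical in
/-- The series ℓ(T) = ∑_{i≥0} T^{p^i}/p^i over ℚ. -/
def lseries (p : ℕ) : PowerSeries ℚ :=
  PowerSeries.mk fun n => if ∃ i : ℕ, n = p ^ i then (n : ℚ)⁻¹ else 0

/-- Substitution `f(g)` of a power series `g` with zero constant coefficient
into a power series `f`. -/
def psComp {R : Type*} [CommSemiring R] (g f : PowerSeries R) : PowerSeries R :=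
  PowerSeries.mk fun n =>
    ∑ k ∈ Finset.range (n + 1), PowerSeries.coeff (R := R) k f * PowerSeries.coeff (R := R) n (g ^ k)

/-- The Artin–Hasse exponential E(T) = exp(∑ T^{p^i}/p^i) over ℚ. -/
def artinHasse (p : ℕ) : PowerSeries ℚ := psComp (lseries p) (PowerSeries.exp ℚ)

variable (p : ℕ) [Fact p.Prime]

/-- The property that `Ep` is the Artin–Hasse exponential regarded as a power
series with coefficients in `ℤ_p` (its coefficients lie in `ℤ_(p) ⊆ ℤ_p`). -/
def IsArtinHasseZp (Ep : PowerSeries ℤ_[p]) : Prop :=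
  PowerSeries.map (PadicInt.Coe.ringHom) Ep
    = PowerSeries.map (Rat.castHom ℚ_[p]) (artinHasse p)

/-- The property that `πfam i` is the power series `π_i(T) ∈ T·ℤ_p[[T]]`
with `E(π_i(T)) = (1+T)^{p^i}`. -/
def IsPiFamily (Ep : PowerSeries ℤ_[p]) (πfam : ℕ → PowerSeries ℤ_[p]) : Prop :=
  ∀ i : ℕ, PowerSeries.constantCoeff (R := ℤ_[p]) (πfam i) = 0
    ∧ psComp (πfam i) Ep = (1 + X) ^ p ^ i

/-!
Reduce modulo `p`: in `𝔽_p[[T]]` the relation becomes `E(π̄_i) = (1 + T)^{p^i} = 1 + T^{p^i}`.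
Since `E(T) = 1 + T + O(T²)`, one has `E(π) ≡ E(0) + π` modulo `T^{2d}` whenever `T^d ∣ π`;
raising `d` step by step up to `p^i` shows `π̄_i = T^{p^i} + O(T^{p^i + 1})`. Lifting back along
`ℤ_p → 𝔽_p`, whose kernel is `p ℤ_p`, puts the discrepancy into `p·T·ℤ_p[[T]]`.
-/

section PowerSeries

variable {R S : Type*}

theorem map_psComp [CommSemiring R] [CommSemiring S] (f : R →+* S) (g h : R⟦X⟧) :
    map f (psComp g h) = psComp (map f g) (map f h) := by
  ext n
  simp only [psComp, coeff_map, coeff_mk, map_sum, map_mul, ← map_pow]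

theorem X_pow_two_mul_dvd_psComp_sub [CommRing R] {π E : R⟦X⟧} {d : ℕ} (hd : X ^ d ∣ π) :
    X ^ (2 * d) ∣ psComp π E - C (coeff 0 E) - C (coeff 1 E) * π := by
  rw [X_pow_dvd_iff]
  intro n hn
  have hπ0 : constantCoeff π = 0 := X_dvd_iff.mp ((dvd_pow_self X (by omega)).trans hd)
  have hhigh : ∀ k, 1 < k → coeff n (π ^ k) = 0 := fun k hk ↦ by
    have : X ^ (2 * d) ∣ π ^ k :=
      calc X ^ (2 * d) ∣ X ^ (d * k) := pow_dvd_pow X (by nlinarith)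
        _ = (X ^ d) ^ k := pow_mul X d k
        _ ∣ π ^ k := pow_dvd_pow_of_dvd hd k
    exact X_pow_dvd_iff.mp this n hn
  rcases Nat.eq_zero_or_pos n with rfl | hn1
  · simp [psComp, hπ0]
  have hsum : coeff n (psComp π E) = ∑ k ∈ Finset.range 2, coeff k E * coeff n (π ^ k) := by
    rw [psComp, coeff_mk]
    symm
    refine Finset.sum_subset (Finset.range_subset_range.mpr (by omega)) fun k _ hk ↦ ?_
    rw [hhigh k (by simpa using hk), mul_zero]
  simp [hsum, Finset.sum_range_succ, coeff_one, coeff_C, hn1.ne']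

theorem X_pow_succ_dvd_sub_of_psComp_eq_one_add_X_pow [CommRing R] {π E : R⟦X⟧} {N : ℕ}
    (hN : N ≠ 0) (hπ : X ∣ π) (hE : coeff 1 E = 1) (h : psComp π E = 1 + X ^ N) :
    X ^ (N + 1) ∣ π - X ^ N := by
  have hE0 : coeff 0 E = 1 := by
    simpa [psComp, coeff_X_pow, hN] using congrArg (coeff 0) h
  have hlin : ∀ d, X ^ d ∣ π → X ^ (2 * d) ∣ X ^ N - π := fun d hd ↦ by
    simpa [h, hE0, hE] using X_pow_two_mul_dvd_psComp_sub (E := E) hd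
  have hval : ∀ d ≤ N, X ^ d ∣ π := by
    intro d
    induction d with
    | zero => simp
    | succ d ih =>
      intro hd
      rw [X_pow_dvd_iff]
      intro m hm
      rcases Nat.lt_succ_iff_lt_or_eq.mp hm with hm | rfl
      · exact X_pow_dvd_iff.mp (ih (by omega)) m hm
      rcases Nat.eq_zero_or_pos m with rfl | hm0
      · simpa using X_dvd_iff.mp hπ
      have hmN : m ≠ N := by omega
      simpa [coeff_X_pow, hmN] using
        X_pow_dvd_iff.mp (hlin m (ih (by omega))) m (by omega)
  rw [dvd_sub_comm]
  exact (pow_dvd_pow X (by omega)).trans (hlin N (hval N le_rfl))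

theorem exists_eq_X_pow_mul_add_C_mul_of_X_pow_dvd_map [CommRing R] [Semiring S]
    (f : R →+* S) {a : R} (ha : RingHom.ker f = Ideal.span {a}) {φ : R⟦X⟧} {n : ℕ}
    (h : X ^ n ∣ map f φ) : ∃ u g : R⟦X⟧, φ = X ^ n * u + C a * g := by
  obtain ⟨q, hq⟩ : Polynomial.C a ∣ trunc n φ := by
    refine (Polynomial.C_dvd_iff_dvd_coeff _ _).mpr fun m ↦ ?_
    rw [coeff_trunc]
    split_ifs with hm
    · rw [← Ideal.mem_span_singleton, ← ha, RingHom.mem_ker, ← coeff_map]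
      exact X_pow_dvd_iff.mp h m hm
    · exact dvd_zero a
  refine ⟨mk fun i ↦ coeff (i + n) φ, q, ?_⟩
  rw [← Polynomial.coe_C, ← Polynomial.coe_mul, ← hq]
  exact eq_X_pow_mul_shift_add_trunc n φ

end PowerSeries

theorem coeff_one_artinHasse (p : ℕ) : coeff 1 (artinHasse p) = 1 := by
  have hℓ : coeff 1 (lseries p) = 1 := by
    simp [lseries, coeff_mk, (⟨0, (pow_zero p).symm⟩ : ∃ i : ℕ, 1 = p ^ i)]
  simp [artinHasse, psComp, Finset.sum_range_succ, hℓ, coeff_exp]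

theorem IsArtinHasseZp.coeff_one {Ep : ℤ_[p]⟦X⟧} (hEp : IsArtinHasseZp p Ep) :
    coeff 1 Ep = 1 := by
  have := congrArg (coeff 1) hEp
  rw [coeff_map, coeff_map, coeff_one_artinHasse, map_one] at this
  exact PadicInt.ext this

theorem map_toZMod_one_add_X_pow_pow (i : ℕ) :
    map (PadicInt.toZMod (p := p)) ((1 + X) ^ p ^ i) = 1 + X ^ p ^ i := by
  have : CharP (ZMod p)⟦X⟧ p := charP_of_injective_algebraMap (R := ZMod p) C_injective p
  rw [map_pow, map_add, map_one, map_X, add_pow_char_pow, one_pow]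

/-- for every `i ≥ 0` one has
`π_i(T) ∈ T^{p^i}·(1 + T·ℤ_p[[T]]) + p·T·ℤ_p[[T]]`. -/
theorem statement5
    (Ep : PowerSeries ℤ_[p]) (hEp : IsArtinHasseZp p Ep)
    (πfam : ℕ → PowerSeries ℤ_[p]) (hπ : IsPiFamily p Ep πfam) (i : ℕ) :
    ∃ u g : PowerSeries ℤ_[p],
      πfam i = X ^ p ^ i * (1 + X * u) + (p : PowerSeries ℤ_[p]) * (X * g) := by
  obtain ⟨hπ0, hπE⟩ := hπ i
  have hN : p ^ i ≠ 0 := pow_ne_zero i (Fact.out : p.Prime).ne_zero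
  obtain ⟨π₁, hπ₁⟩ := X_dvd_iff.mpr hπ0
  have hmodp : X ^ (p ^ i + 1) ∣ map PadicInt.toZMod (πfam i) - X ^ p ^ i := by
    refine X_pow_succ_dvd_sub_of_psComp_eq_one_add_X_pow (E := map PadicInt.toZMod Ep) hN ?_ ?_ ?_
    · rw [hπ₁, map_mul, map_X]
      exact dvd_mul_right X _
    · rw [coeff_map, hEp.coeff_one, map_one]
    · rw [← map_psComp, hπE, map_toZMod_one_add_X_pow_pow]
  have hπ₁modp : X ^ p ^ i ∣ map PadicInt.toZMod (π₁ - X ^ (p ^ i - 1)) := by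
    have hfactor : X * map PadicInt.toZMod π₁ - X ^ p ^ i =
        X * map PadicInt.toZMod (π₁ - X ^ (p ^ i - 1)) := by
      rw [map_sub, map_pow, map_X, mul_sub, mul_pow_sub_one hN]
    rwa [hπ₁, map_mul, map_X, hfactor, pow_succ', mul_dvd_mul_iff_left X_ne_zero] at hmodp
  obtain ⟨u, g, h⟩ := exists_eq_X_pow_mul_add_C_mul_of_X_pow_dvd_map PadicInt.toZMod
    (PadicInt.ker_toZMod.trans PadicInt.maximalIdeal_eq_span_p) hπ₁modp
  refine ⟨u, g, ?_⟩
  rw [map_natCast] at h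
  rw [hπ₁]
  linear_combination X * h + mul_pow_sub_one hN (X : ℤ_[p]⟦X⟧)

end
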